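/- Let T(h) denote the transmission of the vertex 0 in MC(3^h), i.e. T(h) = Σ_{v ∈ ℤ/3^hℤ} d(0,v) (which, since MC(3^h) is a transmission-regular circulant graph, equals its distance spectral radius). Then for every integer h ≥ 2, T(h) = 3·T(h−1) + 2·3^{h−1}. -/

import Mathlib

/-- The circulant graph `Cay(Z_n, S)`: vertices are `ZMod n`, and distinct
vertices `x, y` are adjacent iff `x - y ≡ s` or `y - x ≡ s (mod n)` for some `s ∈ S`. -/
def circulantGraph (n : ℕ) (S : Set ℕ) : SimpleGraph (ZMod n) where
  Adj x y := x ≠ y ∧ ∃ s ∈ S, (x - y = (s : ZMod n) ∨ y - x = (s : ZMod n))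
  symm := by
    constructor
    rintro x y ⟨hne, s, hs, h⟩
    exact ⟨hne.symm, s, hs, h.symm⟩
  loopless := by
    constructor
    rintro x ⟨hne, -⟩
    exact hne rfl

/-- The multiplicative circulant graph `MC(m^h) = Cay(Z_{m^h}, {m^0, m^1, …, m^{h-1}})`. -/
def MCGraph (m h : ℕ) : SimpleGraph (ZMod (m ^ h)) :=
  circulantGraph (m ^ h) {s | ∃ i < h, s = m ^ i}

/-- The transmission of the vertex `0` in `MC(3^h)`: the sum of the distances from
`0` to all vertices (equal to the distance spectral radius of this circulant graph). -/
noncomputable def MCthreeTransmission (h : ℕ) : ℕ :=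
  ∑ v : ZMod (3 ^ h), (MCGraph 3 h).dist 0 v

def bdig (n : ℤ) : ℤ := if n % 3 = 2 then -1 else n % 3

def bwlow : ℕ → ℤ → ℕ
  | 0, _ => 0
  | h+1, n => (bdig n).natAbs + bwlow h ((n - bdig n) / 3)

lemma bdig_mem (n : ℤ) : bdig n = -1 ∨ bdig n = 0 ∨ bdig n = 1 := by
  unfold bdig; split <;> omega

lemma bdig_spec (n : ℤ) : n = 3 * ((n - bdig n) / 3) + bdig n := by
  unfold bdig; split <;> omega

lemma bwlow_step (h : ℕ) (q d : ℤ) (hd : d = -1 ∨ d = 0 ∨ d = 1) :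
    bwlow (h+1) (3*q + d) = d.natAbs + bwlow h q := by
  have h1 : bdig (3*q + d) = d := by unfold bdig; rcases hd with h|h|h <;> subst h <;> omega
  show (bdig (3*q+d)).natAbs + bwlow h ((3*q + d - bdig (3*q+d)) / 3) = _
  rw [h1]; congr 2; omega

lemma bwlow_zero (h : ℕ) : bwlow h 0 = 0 := by
  induction h with
  | zero => rfl
  | succ h ih => have := bwlow_step h 0 0 (by omega); simpa [ih] using this

lemma bwlow_congr (h : ℕ) {n m : ℤ} (hc : n % 3^h = m % 3^h) : bwlow h n = bwlow h m := by
  induction h generalizing n m with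
  | zero => rfl
  | succ h ih =>
    obtain ⟨t, ht⟩ : (3:ℤ)^(h+1) ∣ m - n := Int.ModEq.dvd hc
    have hd := bdig_mem n
    have hn := bdig_spec n
    set d := bdig n with hdd
    set q := (n - d)/3 with hq
    have ht' : m - n = 3 * (3^h * t) := by rw [ht, pow_succ]; ring
    have hm : m = 3 * (q + 3^h * t) + d := by omega
    rw [show n = 3*q + d from hn, hm, bwlow_step h q d hd, bwlow_step h _ d hd]
    rw [ih (n := q) (m := q + 3^h * t) (by simp [Int.add_mul_emod_self_left])]

lemma bwlow_small_step (h : ℕ) (q s : ℤ) (hs : -2 ≤ s ∧ s ≤ 2)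
    (ih1 : bwlow h (q+1) ≤ bwlow h q + 1) (ihm : bwlow h (q-1) ≤ bwlow h q + 1) :
    bwlow (h+1) (3*q + s) ≤ bwlow h q + s.natAbs := by
  have h5 : s = -2 ∨ s = -1 ∨ s = 0 ∨ s = 1 ∨ s = 2 := by omega
  rcases h5 with h|h|h|h|h <;> subst h
  · rw [show 3*q + (-2:ℤ) = 3*(q-1) + 1 by ring, bwlow_step h (q-1) 1 (by omega)]; omega
  · rw [bwlow_step h q (-1) (by omega)]; omega
  · rw [bwlow_step h q 0 (by omega)]; omega
  · rw [bwlow_step h q 1 (by omega)]; omega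
  · rw [show 3*q + (2:ℤ) = 3*(q+1) + (-1) by ring, bwlow_step h (q+1) (-1) (by omega)]; omega

lemma bwlow_add (h : ℕ) : ∀ (i : ℕ) (n e : ℤ), (e = -1 ∨ e = 0 ∨ e = 1) →
    bwlow h (n + e * 3^i) ≤ bwlow h n + e.natAbs := by
  induction h with
  | zero => intro i n e he; simp [bwlow]
  | succ h ih =>
    intro i n e he
    have hd := bdig_mem n
    have hn := bdig_spec n
    set d := bdig n with hdd
    set q := (n - d)/3 with hq
    rw [show bwlow (h+1) n = d.natAbs + bwlow h q from by rw [← bwlow_step h q d hd, ← hn]]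
    cases i with
    | zero =>
      have h2 := ih 0 q 1 (by omega)
      have h3 := ih 0 q (-1) (by omega)
      simp only [pow_zero, mul_one] at h2 h3 ⊢
      rw [show n + e = 3*q + (d + e) from by omega]
      have := bwlow_small_step h q (d+e) (by omega)
        (by simpa using h2) (by rw [show q - 1 = q + -1 by ring]; simpa using h3)
      omega
    | succ i =>
      have hrw : n + e * 3^(i+1) = 3 * (q + e * 3^i) + d := by rw [pow_succ]; ring_nf; omega
      rw [hrw, bwlow_step h _ d hd]
      have := ih i q e he
      omega

lemma pow3_ne (h k : ℕ) (hk : k < h) : ((3:ZMod (3^h)))^k ≠ 0 := by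
  intro h0
  have : (((3:ℤ)^k : ℤ) : ZMod (3^h)) = 0 := by push_cast; exact h0
  rw [ZMod.intCast_zmod_eq_zero_iff_dvd] at this
  have h1 : ((3:ℤ)^h) ∣ 3^k := by exact_mod_cast this
  have h2 : (3:ℤ)^h ≤ 3^k := Int.le_of_dvd (by positivity) h1
  have h3 : (3:ℤ)^k < 3^h := pow_lt_pow_right₀ (by norm_num) hk
  omega

lemma adj_step (h k : ℕ) (hk : k < h) (u : ZMod (3^h)) (e : ℤ) (he : e = -1 ∨ e = 1) :
    (MCGraph 3 h).Adj u (u + (e : ZMod (3^h)) * 3^k) := by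
  refine ⟨?_, 3^k, ⟨k, hk, rfl⟩, ?_⟩
  · intro heq
    have : (e : ZMod (3^h)) * 3^k = 0 := by
      have := heq.symm
      rwa [add_eq_left] at this
    rcases he with he|he <;> subst he <;> simp at this <;>
      exact pow3_ne h k hk (by simpa using this)
  · rcases he with he|he <;> subst he
    · left; push_cast; ring
    · right; push_cast; ring

lemma exists_walk (h : ℕ) : ∀ (j k : ℕ) (n : ℤ), h ≤ k + j →
    ∃ w : (MCGraph 3 h).Walk 0 ((3^k * n : ℤ) : ZMod (3^h)), w.length ≤ bwlow j n := by
  intro j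
  induction j with
  | zero =>
    intro k n hkj
    have h0 : ((3^k * n : ℤ) : ZMod (3^h)) = 0 := by
      rw [ZMod.intCast_zmod_eq_zero_iff_dvd]
      push_cast
      exact dvd_mul_of_dvd_left (pow_dvd_pow 3 (by omega)) n
    rw [h0]
    exact ⟨.nil, by simp [bwlow]⟩
  | succ j ih =>
    intro k n hkj
    have hd := bdig_mem n
    have hn := bdig_spec n
    set d := bdig n with hdd
    set q := (n - d)/3 with hq
    have hbw : bwlow (j+1) n = d.natAbs + bwlow j q := by
      rw [show n = 3*q + d from hn, bwlow_step j q d hd]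
    obtain ⟨w, hw⟩ := ih (k+1) q (by omega)
    by_cases hdz : d = 0
    · have ht : ((3^k * n : ℤ) : ZMod (3^h)) = ((3^(k+1) * q : ℤ) : ZMod (3^h)) := by
        rw [show n = 3*q + d from hn, hdz]; push_cast; ring_nf
      rw [ht]
      exact ⟨w, by omega⟩
    · by_cases hkh : k < h
      · have ht : ((3^k * n : ℤ) : ZMod (3^h))
            = ((3^(k+1) * q : ℤ) : ZMod (3^h)) + (d : ZMod (3^h)) * 3^k := by
          rw [show n = 3*q + d from hn]; push_cast; ring
        rw [ht]
        refine ⟨w.concat (adj_step h k hkh _ d (by omega)), ?_⟩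
        rw [SimpleGraph.Walk.length_concat]
        have : d.natAbs = 1 := by omega
        omega
      · have ht : ((3^k * n : ℤ) : ZMod (3^h)) = ((3^(k+1) * q : ℤ) : ZMod (3^h)) := by
          rw [ZMod.intCast_eq_intCast_iff, Int.modEq_iff_dvd]
          have heq : (3:ℤ)^(k+1) * q - 3^k * n = -(3^k * d) := by rw [hn]; ring
          rw [heq]
          push_cast
          exact (dvd_mul_of_dvd_left (pow_dvd_pow 3 (by omega)) d).neg_right
        rw [ht]
        exact ⟨w, by omega⟩

lemma walk_lb (h : ℕ) [NeZero (3^h)] {a b : ZMod (3^h)} (w : (MCGraph 3 h).Walk a b) :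
    bwlow h ((b.val : ℤ) - (a.val : ℤ)) ≤ w.length := by
  induction w with
  | nil => simp [bwlow_zero]
  | @cons a c b hadj p ih =>
    obtain ⟨hne, s, ⟨i, hi, rfl⟩, hcase⟩ := hadj
    have hva : ((a.val : ℕ) : ZMod (3^h)) = a := ZMod.natCast_rightInverse a
    have hvc : ((c.val : ℕ) : ZMod (3^h)) = c := ZMod.natCast_rightInverse c
    obtain ⟨e, he, hce⟩ : ∃ e : ℤ, (e = -1 ∨ e = 1) ∧
        (c - a : ZMod (3^h)) = (e : ZMod (3^h)) * (3 : ZMod (3^h))^i := by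
      rcases hcase with hc1|hc1
      · refine ⟨-1, Or.inl rfl, ?_⟩
        rw [show (c - a : ZMod (3^h)) = -(a - c) by ring, hc1]; push_cast; ring
      · exact ⟨1, Or.inr rfl, by rw [hc1]; push_cast; ring⟩
    have hdvd : ((3^h : ℕ) : ℤ) ∣ ((c.val : ℤ) - a.val - e * 3^i) := by
      rw [← ZMod.intCast_zmod_eq_zero_iff_dvd]
      push_cast
      rw [hva, hvc, sub_eq_zero, hce]
    obtain ⟨t, ht⟩ := hdvd
    push_cast at ht
    have h1 : ((b.val : ℤ) - a.val) % 3^h = (((b.val : ℤ) - c.val) + e * 3^i) % 3^h := by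
      have hx : (b.val : ℤ) - a.val = (((b.val : ℤ) - c.val) + e * 3^i) + 3^h * t := by omega
      rw [hx, Int.add_mul_emod_self_left]
    rw [bwlow_congr h h1]
    have h2 := bwlow_add h i ((b.val : ℤ) - c.val) e (by tauto)
    have h3 := ih
    have h4 : e.natAbs = 1 := by rcases he with he|he <;> subst he <;> rfl
    show _ ≤ p.length + 1
    omega

lemma dist_eq (h : ℕ) (v : ZMod (3^h)) : (MCGraph 3 h).dist 0 v = bwlow h (v.val : ℤ) := by
  haveI : NeZero (3^h) := ⟨pow_ne_zero _ (by norm_num)⟩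
  obtain ⟨w, hw⟩ := exists_walk h h 0 (v.val : ℤ) (by omega)
  have hcast : ((3^0 * (v.val : ℤ) : ℤ) : ZMod (3^h)) = v := by
    push_cast
    simpa using (ZMod.natCast_rightInverse v : ((v.val : ℕ) : ZMod (3^h)) = v)
  have hub : (MCGraph 3 h).dist 0 ((3^0 * (v.val : ℤ) : ℤ) : ZMod (3^h)) ≤ bwlow h (v.val : ℤ) :=
    le_trans (SimpleGraph.dist_le w) hw
  rw [hcast] at hub
  have hr : (MCGraph 3 h).Reachable 0 v := by rw [← hcast]; exact ⟨w⟩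
  obtain ⟨p, hp⟩ := hr.exists_walk_length_eq_dist
  have hlb := walk_lb h p
  rw [show ((v.val : ℤ) - (((0 : ZMod (3^h)).val : ℕ) : ℤ)) = (v.val : ℤ) by
    simp [ZMod.val_zero]] at hlb
  omega

lemma sum_zmod (N : ℕ) [NeZero N] (f : ℕ → ℕ) :
    ∑ v : ZMod N, f v.val = ∑ i ∈ Finset.range N, f i :=
  Finset.sum_nbij' (i := fun v : ZMod N => v.val) (j := fun i : ℕ => (i : ZMod N))
    (fun v _ => Finset.mem_range.mpr (ZMod.val_lt v))
    (fun i _ => Finset.mem_univ _)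
    (fun v _ => ZMod.natCast_rightInverse v)
    (fun i hi => ZMod.val_cast_of_lt (Finset.mem_range.mp hi))
    (fun v _ => rfl)

lemma sum3 (N : ℕ) (f : ℕ → ℕ) :
    ∑ n ∈ Finset.range (3*N), f n
      = ∑ m ∈ Finset.range N, (f (3*m) + f (3*m+1) + f (3*m+2)) := by
  induction N with
  | zero => simp
  | succ N ih =>
    rw [show 3*(N+1) = 3*N+1+1+1 by ring]
    rw [Finset.sum_range_succ, Finset.sum_range_succ, Finset.sum_range_succ, ih,
      Finset.sum_range_succ]
    ring

theorem MC_three_transmission_recursion (h : ℕ) (hh : 2 ≤ h) :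
    MCthreeTransmission h = 3 * MCthreeTransmission (h - 1) + 2 * 3 ^ (h - 1) := by
  obtain ⟨g, rfl⟩ : ∃ g, h = g + 1 := ⟨h-1, by omega⟩
  simp only [Nat.add_sub_cancel]
  have key : ∀ k : ℕ, MCthreeTransmission k = ∑ n ∈ Finset.range (3^k), bwlow k (n : ℤ) := by
    intro k
    haveI : NeZero (3^k) := ⟨pow_ne_zero _ (by norm_num)⟩
    unfold MCthreeTransmission
    rw [show (∑ v : ZMod (3^k), (MCGraph 3 k).dist 0 v)
        = ∑ v : ZMod (3^k), (fun n : ℕ => bwlow k (n : ℤ)) v.val from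
      Finset.sum_congr rfl (fun v _ => dist_eq k v)]
    exact sum_zmod (3^k) (fun n => bwlow k (n:ℤ))
  rw [key, key]
  rw [show (3:ℕ)^(g+1) = 3 * 3^g from by ring, sum3]
  have hterm : ∀ m : ℕ,
      bwlow (g+1) ((3*m : ℕ) : ℤ) + bwlow (g+1) ((3*m+1 : ℕ) : ℤ)
        + bwlow (g+1) ((3*m+2 : ℕ) : ℤ)
      = 2 + 2 * bwlow g (m : ℤ) + bwlow g ((m : ℤ)+1) := by
    intro m
    have e0 : ((3*m : ℕ) : ℤ) = 3*(m:ℤ) + 0 := by push_cast; ring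
    have e1 : ((3*m+1 : ℕ) : ℤ) = 3*(m:ℤ) + 1 := by push_cast; ring
    have e2 : ((3*m+2 : ℕ) : ℤ) = 3*((m:ℤ)+1) + (-1) := by push_cast; ring
    rw [e0, e1, e2, bwlow_step g _ 0 (by omega), bwlow_step g _ 1 (by omega),
      bwlow_step g _ (-1) (by omega)]
    simp only [Int.natAbs_zero, Int.natAbs_one, Int.natAbs_neg]
    omega
  rw [Finset.sum_congr rfl (fun m _ => hterm m)]
  have hshift : ∑ m ∈ Finset.range (3^g), bwlow g ((m:ℤ)+1)
      = ∑ m ∈ Finset.range (3^g), bwlow g (m:ℤ) := by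
    have h1 := Finset.sum_range_succ' (fun m : ℕ => bwlow g (m:ℤ)) (3^g)
    have h2 := Finset.sum_range_succ (fun m : ℕ => bwlow g (m:ℤ)) (3^g)
    have h3 : bwlow g (((3^g : ℕ) : ℕ) : ℤ) = 0 := by
      rw [bwlow_congr g (show (((3^g:ℕ):ℕ):ℤ) % 3^g = 0 % 3^g by push_cast; simp), bwlow_zero]
    have h4 : bwlow g (((0:ℕ)):ℤ) = 0 := by simpa using bwlow_zero g
    have hc : ∀ m : ℕ, bwlow g ((m:ℤ)+1) = bwlow g (((m+1:ℕ)):ℤ) := by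
      intro m; norm_cast
    rw [Finset.sum_congr rfl (fun m _ => hc m)]
    omega
  rw [Finset.sum_add_distrib, Finset.sum_add_distrib, Finset.sum_const, Finset.card_range,
    hshift, ← Finset.mul_sum]
  simp only [smul_eq_mul]
  ring
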